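/- Let d ≥ 2, let L be a linear map on Matrix (Fin d) (Fin d) ℂ, and suppose there exist ε₀ > 0 and a family (E_ε)_{0 < ε < ε₀} of quantum channels on Matrix (Fin d) (Fin d) ℂ such that (E_ε − id)/ε converges to L as ε → 0⁺ in the norm topology on linear maps. Then L is conditionally completely positive: with ω = (1/d) Σ_{i,j} E_{ij} ⊗ₖ E_{ij} and τ_L = (1/d) Σ_{i,j} E_{ij} ⊗ₖ L(E_{ij}), the matrix (1 − ω) * τ_L * (1 − ω) is positive semidefinite. -/

import Mathlib

open scoped Kronecker ComplexOrder Matrix Topology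

attribute [local instance] Matrix.frobeniusNormedAddCommGroup Matrix.frobeniusNormedSpace

noncomputable section

/-- The block of `M` at position `(a, b)` when `M` is viewed as a block matrix. -/
def blockAt {k n : ℕ} (M : Matrix (Fin k × Fin n) (Fin k × Fin n) ℂ) (a b : Fin k) :
    Matrix (Fin n) (Fin n) ℂ :=
  Matrix.of fun i j => M (a, i) (b, j)

/-- The extension `id_k ⊗ Φ` of a continuous linear map `Φ` acting blockwise. -/
def matExtend {n : ℕ} (k : ℕ)
    (Φ : Matrix (Fin n) (Fin n) ℂ →L[ℂ] Matrix (Fin n) (Fin n) ℂ)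
    (M : Matrix (Fin k × Fin n) (Fin k × Fin n) ℂ) :
    Matrix (Fin k × Fin n) (Fin k × Fin n) ℂ :=
  ∑ a : Fin k, ∑ b : Fin k,
    (Matrix.single a b (1 : ℂ)) ⊗ₖ Φ (blockAt M a b)

/-- A quantum channel: a completely positive and trace-preserving (continuous) linear map. -/
def IsQuantumChannel {n : ℕ}
    (Φ : Matrix (Fin n) (Fin n) ℂ →L[ℂ] Matrix (Fin n) (Fin n) ℂ) : Prop :=
  (∀ k : ℕ, 1 ≤ k → ∀ M : Matrix (Fin k × Fin n) (Fin k × Fin n) ℂ,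
    M.PosSemidef → (matExtend k Φ M).PosSemidef) ∧
  (∀ X, (Φ X).trace = X.trace)

/-- The (normalized) maximally entangled projector `ω = (1/d) ∑ i j, E i j ⊗ₖ E i j`. -/
def omegaMat (d : ℕ) : Matrix (Fin d × Fin d) (Fin d × Fin d) ℂ :=
  (1 / (d : ℂ)) • ∑ i : Fin d, ∑ j : Fin d,
    (Matrix.single i j (1 : ℂ)) ⊗ₖ (Matrix.single i j (1 : ℂ))

/-- The Choi–Jamiołkowski matrix `τ_L = (1/d) ∑ i j, E i j ⊗ₖ L (E i j)` of a map. -/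
def cjMat {d : ℕ} (L : Matrix (Fin d) (Fin d) ℂ →L[ℂ] Matrix (Fin d) (Fin d) ℂ) :
    Matrix (Fin d × Fin d) (Fin d × Fin d) ℂ :=
  (1 / (d : ℂ)) • ∑ i : Fin d, ∑ j : Fin d,
    (Matrix.single i j (1 : ℂ)) ⊗ₖ L (Matrix.single i j (1 : ℂ))

/-! Since `τ_Φ = (id ⊗ Φ)(ω)` and `ω ≥ 0`, the Choi matrix of a channel is positive
semidefinite; also `τ_id = ω`. As `ω` is a projection, compressing by `1 - ω` kills that term:
`(1 - ω) τ_{(E ε - id)/ε} (1 - ω) = ε⁻¹ (1 - ω) τ_{E ε} (1 - ω) ≥ 0`. The compression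
`L ↦ (1 - ω) τ_L (1 - ω)` is linear on a finite-dimensional space, hence continuous, and the
positive semidefinite cone is closed, so the limit `L` inherits the property. -/

open Matrix

lemma isClosed_setOf_posSemidef {𝕜 n : Type*} [RCLike 𝕜] [Fintype n] :
    IsClosed {A : Matrix n n 𝕜 | A.PosSemidef} := by
  simp only [posSemidef_iff_dotProduct_mulVec, IsHermitian, Set.ofPred_and, Set.ofPred_forall]
  exact (isClosed_eq continuous_id.matrix_conjTranspose continuous_id).inter
    (isClosed_iInter fun x => isClosed_le continuous_const (by fun_prop))

def cjMatLinearMap (d : ℕ) :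
    (Matrix (Fin d) (Fin d) ℂ →L[ℂ] Matrix (Fin d) (Fin d) ℂ) →ₗ[ℂ]
      Matrix (Fin d × Fin d) (Fin d × Fin d) ℂ where
  toFun := cjMat
  map_add' Φ Ψ := by
    simp only [cjMat, _root_.add_apply, kronecker_add, Finset.sum_add_distrib, smul_add]
  map_smul' c Φ := by
    simp only [cjMat, _root_.smul_apply, kronecker_smul, ← Finset.smul_sum, RingHom.id_apply,
      smul_comm c]

def vecId (d : ℕ) : Fin d × Fin d → ℂ := fun p => if p.1 = p.2 then 1 else 0

section

variable {d : ℕ}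

lemma omegaMat_apply (p q : Fin d × Fin d) :
    omegaMat d p q = if p.1 = p.2 ∧ q.1 = q.2 then (d : ℂ)⁻¹ else 0 := by
  simp [omegaMat, Matrix.sum_apply, single, ite_and, eq_comm, one_div]

lemma omegaMat_eq_smul_vecMulVec :
    omegaMat d = (d : ℂ)⁻¹ • vecMulVec (vecId d) (star (vecId d)) := by
  ext p q
  simp [omegaMat_apply, vecId, vecMulVec_apply, ← ite_and, and_comm]

lemma star_vecId_dotProduct_vecId : star (vecId d) ⬝ᵥ vecId d = d := by
  simp [vecId, dotProduct, Fintype.sum_prod_type, apply_ite]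

lemma omegaMat_posSemidef : (omegaMat d).PosSemidef := by
  rw [omegaMat_eq_smul_vecMulVec]
  exact (posSemidef_vecMulVec_self_star _).smul (by positivity)

lemma omegaMat_mul_self (hd : d ≠ 0) : omegaMat d * omegaMat d = omegaMat d := by
  rw [omegaMat_eq_smul_vecMulVec, smul_mul_smul_comm, vecMulVec_mul_vecMulVec,
    star_vecId_dotProduct_vecId, vecMulVec_smul, smul_smul, mul_assoc,
    inv_mul_cancel₀ (Nat.cast_ne_zero.2 hd), mul_one]

lemma blockAt_omegaMat (a b : Fin d) :
    blockAt (omegaMat d) a b = (d : ℂ)⁻¹ • single a b 1 := by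
  ext i j
  simp [blockAt, omegaMat_apply, single, ite_and]

lemma matExtend_omegaMat (Φ : Matrix (Fin d) (Fin d) ℂ →L[ℂ] Matrix (Fin d) (Fin d) ℂ) :
    matExtend d Φ (omegaMat d) = cjMat Φ := by
  simp only [matExtend, cjMat, blockAt_omegaMat, map_smul, kronecker_smul, Finset.smul_sum,
    one_div]

lemma IsQuantumChannel.posSemidef_cjMat
    {Φ : Matrix (Fin d) (Fin d) ℂ →L[ℂ] Matrix (Fin d) (Fin d) ℂ}
    (hΦ : IsQuantumChannel Φ) (hd : 1 ≤ d) : (cjMat Φ).PosSemidef :=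
  matExtend_omegaMat Φ ▸ hΦ.1 d hd _ omegaMat_posSemidef

lemma cjMat_smul (c : ℂ) (Φ : Matrix (Fin d) (Fin d) ℂ →L[ℂ] Matrix (Fin d) (Fin d) ℂ) :
    cjMat (c • Φ) = c • cjMat Φ :=
  (cjMatLinearMap d).map_smul c Φ

lemma cjMat_sub (Φ Ψ : Matrix (Fin d) (Fin d) ℂ →L[ℂ] Matrix (Fin d) (Fin d) ℂ) :
    cjMat (Φ - Ψ) = cjMat Φ - cjMat Ψ :=
  map_sub (cjMatLinearMap d) Φ Ψ

lemma cjMat_id : cjMat (ContinuousLinearMap.id ℂ (Matrix (Fin d) (Fin d) ℂ)) = omegaMat d := rfl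

def IsCondCompletelyPositive (L : Matrix (Fin d) (Fin d) ℂ →L[ℂ] Matrix (Fin d) (Fin d) ℂ) :
    Prop :=
  ((1 - omegaMat d) * cjMat L * (1 - omegaMat d)).PosSemidef

lemma isClosed_setOf_isCondCompletelyPositive :
    IsClosed {L : Matrix (Fin d) (Fin d) ℂ →L[ℂ] Matrix (Fin d) (Fin d) ℂ |
      IsCondCompletelyPositive L} :=
  isClosed_setOf_posSemidef.preimage <|
    (continuous_const.matrix_mul (cjMatLinearMap d).continuous_of_finiteDimensional).matrix_mul
      continuous_const

lemma IsCondCompletelyPositive.smul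
    {L : Matrix (Fin d) (Fin d) ℂ →L[ℂ] Matrix (Fin d) (Fin d) ℂ}
    (hL : IsCondCompletelyPositive L) {c : ℝ} (hc : 0 ≤ c) :
    IsCondCompletelyPositive ((c : ℂ) • L) := by
  rw [IsCondCompletelyPositive, cjMat_smul, mul_smul_comm, smul_mul_assoc]
  exact PosSemidef.smul hL (Complex.zero_le_real.2 hc)

lemma isCondCompletelyPositive_sub_id (hd : d ≠ 0)
    {Φ : Matrix (Fin d) (Fin d) ℂ →L[ℂ] Matrix (Fin d) (Fin d) ℂ} (hΦ : (cjMat Φ).PosSemidef) :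
    IsCondCompletelyPositive (Φ - ContinuousLinearMap.id ℂ _) := by
  have hP : (1 - omegaMat d)ᴴ = 1 - omegaMat d := by
    rw [conjTranspose_sub, conjTranspose_one, omegaMat_posSemidef.1.eq]
  have hPω : (1 - omegaMat d) * omegaMat d = 0 := by
    rw [Matrix.sub_mul, Matrix.one_mul, omegaMat_mul_self hd, sub_self]
  have hcompress := hΦ.mul_mul_conjTranspose_same (1 - omegaMat d)
  rw [hP] at hcompress
  rwa [IsCondCompletelyPositive, cjMat_sub, cjMat_id, Matrix.mul_sub (1 - omegaMat d), hPω,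
    sub_zero]

end

/-- **Generators of instantaneous channels are conditionally completely positive.** If
`(E ε − id)/ε` converges to `L` as `ε → 0⁺`, where the `E ε` are quantum channels, then
`(1 − ω) τ_L (1 − ω)` is positive semidefinite. -/
theorem generator_of_channels_ccp {d : ℕ} (hd : 2 ≤ d)
    (L : Matrix (Fin d) (Fin d) ℂ →L[ℂ] Matrix (Fin d) (Fin d) ℂ)
    (ε₀ : ℝ) (hε₀ : 0 < ε₀)
    (E : ℝ → (Matrix (Fin d) (Fin d) ℂ →L[ℂ] Matrix (Fin d) (Fin d) ℂ))
    (hE : ∀ ε : ℝ, 0 < ε → ε < ε₀ → IsQuantumChannel (E ε))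
    (hlim : Filter.Tendsto
      (fun ε : ℝ => (ε : ℂ)⁻¹ • (E ε - ContinuousLinearMap.id ℂ (Matrix (Fin d) (Fin d) ℂ)))
      (𝓝[>] (0 : ℝ)) (𝓝 L)) :
    ((1 - omegaMat d) * cjMat L * (1 - omegaMat d)).PosSemidef := by
  have hgen : ∀ᶠ ε : ℝ in 𝓝[>] 0, IsCondCompletelyPositive
      ((ε : ℂ)⁻¹ • (E ε - ContinuousLinearMap.id ℂ (Matrix (Fin d) (Fin d) ℂ))) := by
    filter_upwards [Ioo_mem_nhdsGT hε₀] with ε ⟨hε, hεε₀⟩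
    have hτ := (hE ε hε hεε₀).posSemidef_cjMat (by omega)
    simpa using (isCondCompletelyPositive_sub_id (by omega) hτ).smul (inv_nonneg.2 hε.le)
  exact isClosed_setOf_isCondCompletelyPositive.mem_of_tendsto hlim hgen
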